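/- arXiv:2306.17729 — 2 statements merged into one kernel-verified Lean document; each statement's English description precedes it below -/
import Mathlib

section
/- Let G be a group with a central subgroup C isomorphic to ℤ such that the quotient G/C is abelian of rank at most one (i.e., any two elements of G/C have commensurable powers lying in a common cyclic subgroup; equivalently every finitely generated subgroup of G/C has rank at most one). Then G is abelian. -/
/-!
Let `c = ⁅a, b⁆`, which is central. Rank at most one gives `a ^ m = z * b ^ n` with `z` central
and `m`, `n` not both zero, so `a ^ m` commutes with `b` and `b ^ n` commutes with `a`. As `c` is
central, taking commutators is a homomorphism in each variable, whence `c ^ m = ⁅a ^ m, b⁆ = 1`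
and `c ^ n = ⁅a, b ^ n⁆ = 1`. Since `C ≅ ℤ` is torsion-free, `c = 1`.
-/

open scoped commutatorElement

section Commutator

variable {G : Type*} [Group G] {a b : G}

theorem commutatorElement_zpow_right (h : Commute ⁅a, b⁆ b) (n : ℤ) :
    ⁅a, b ^ n⁆ = ⁅a, b⁆ ^ n := by
  have hsemiconj : SemiconjBy a b (⁅a, b⁆ * b) := by
    simp only [SemiconjBy, commutatorElement_def]; group
  have hpow : a * b ^ n = ⁅a, b⁆ ^ n * b ^ n * a := by
    rw [(hsemiconj.zpow_right n).eq, h.mul_zpow]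
  rw [commutatorElement_def, hpow]; group

theorem commutatorElement_zpow_left (h : Commute ⁅a, b⁆ a) (m : ℤ) :
    ⁅a ^ m, b⁆ = ⁅a, b⁆ ^ m := by
  have h' : Commute ⁅b, a⁆ a := by rw [← commutatorElement_inv]; exact h.inv_left
  rw [← commutatorElement_inv, commutatorElement_zpow_right h', ← commutatorElement_inv, inv_zpow, inv_inv]

theorem commute_of_mul_inv_mem_center {x y : G} (hxy : x * y⁻¹ ∈ Subgroup.center G)
    (hy : Commute y b) : Commute x b := by
  have hz : Commute (x * y⁻¹) b := (Subgroup.mem_center_iff.mp hxy b).symm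
  simpa using hz.mul_left hy

end Commutator

theorem Subgroup.eq_one_of_zpow_eq_one {G : Type*} [Group G] {C : Subgroup G}
    [IsMulTorsionFree C] {x : G} (hx : x ∈ C) {k : ℤ} (hk : k ≠ 0) (h : x ^ k = 1) : x = 1 := by
  have : (⟨x, hx⟩ : C) ^ k = 1 := Subtype.ext (by simpa using h)
  simpa using (IsMulTorsionFree.zpow_eq_one_iff_left hk).mp this

/-- If `G` is a group with a central subgroup `C` isomorphic to `ℤ`
such that the quotient `G/C` is abelian of rank at most one (expressed here, equivalently,
by pulling the conditions on `G/C` back to `G`: all commutators lie in `C`, and for any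
`a b : G` there are integers `m n`, not both zero, with `a^m ≡ b^n mod C`),
then `G` is abelian. -/
theorem stmt_0 {G : Type*} [Group G] (C : Subgroup G)
    (hcentral : C ≤ Subgroup.center G)
    (hiso : Nonempty (C ≃* Multiplicative ℤ))
    (habelian : ∀ a b : G, a * b * a⁻¹ * b⁻¹ ∈ C)
    (hrank : ∀ a b : G, ∃ m n : ℤ, (m ≠ 0 ∨ n ≠ 0) ∧ a ^ m * (b ^ n)⁻¹ ∈ C) :
    ∀ a b : G, a * b = b * a := by
  intro a b
  obtain ⟨e⟩ := hiso
  have : IsMulTorsionFree C := Function.Injective.isMulTorsionFree e.toMonoidHom e.injective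
  have hcC : ⁅a, b⁆ ∈ C := habelian a b
  have hc : ∀ g, Commute ⁅a, b⁆ g := fun g => (Subgroup.mem_center_iff.mp (hcentral hcC) g).symm
  rw [← commutatorElement_eq_one_iff_mul_comm]
  obtain ⟨m, n, hm | hn, hz⟩ := hrank a b
  · have hcomm : Commute (a ^ m) b :=
      commute_of_mul_inv_mem_center (hcentral hz) (Commute.self_zpow b n).symm
    refine Subgroup.eq_one_of_zpow_eq_one hcC hm ?_
    rw [← commutatorElement_zpow_left (hc a), commutatorElement_eq_one_iff_commute]
    exact hcomm
  · have hzinv : b ^ n * (a ^ m)⁻¹ ∈ Subgroup.center G := by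
      simpa using inv_mem (hcentral hz)
    have hcomm : Commute a (b ^ n) :=
      (commute_of_mul_inv_mem_center hzinv (Commute.self_zpow a m).symm).symm
    refine Subgroup.eq_one_of_zpow_eq_one hcC hn ?_
    rw [← commutatorElement_zpow_right (hc b), commutatorElement_eq_one_iff_commute]
    exact hcomm
end

section
/- Let G be a group, N a central subgroup isomorphic to ℤ, and Q = G/N. If Q is a surface group π₁(Σ_g) with g ≥ 2 (or more generally any group all of whose abelian subgroups are cyclic of rank at most one), and if elements δ, β ∈ G satisfy βδβ⁻¹ = δcᵏ where c generates N, then k = 0. -/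
/-!
Conjugating by `β` multiplies `δ` by the central element `cᵏ`, so `⁅β, δⁿ⁆ = cᵏⁿ` and
`⁅δ, βᵐ⁆ = c⁻ᵏᵐ`. The rank condition on `Q` gives `βᵐ ∈ N δⁿ` with `m, n` not both zero, so
`βᵐ` commutes with `δ` (if `m ≠ 0`) or `δⁿ` commutes with `β` (if `n ≠ 0`); either way a
nonzero multiple of `k` is killed by the infinite order of `c`.
-/

open scoped commutatorElement

theorem commutatorElement_zpow_right_of_commute {G : Type*} [Group G] {g x z : G}
    (hxz : Commute x z) (h : ⁅g, x⁆ = z) (n : ℤ) : ⁅g, x ^ n⁆ = z ^ n := by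
  have hconj : g * x * g⁻¹ = z * x := by rw [← h, commutatorElement_def]; group
  rw [commutatorElement_def, ← conj_zpow, hconj, hxz.symm.mul_zpow, mul_inv_cancel_right]

theorem eq_zero_of_commutatorElement_eq_zpow {G : Type*} [Group G] {a b c : G}
    (hbc : Commute b c) (hinf : ∀ n : ℤ, n ≠ 0 → c ^ n ≠ 1) {k n : ℤ}
    (h : ⁅a, b⁆ = c ^ k) (hn : n ≠ 0) (hab : Commute a (b ^ n)) : k = 0 := by
  have hpow := commutatorElement_zpow_right_of_commute (hbc.zpow_right k) h n
  rw [commutatorElement_eq_one_iff_commute.mpr hab, ← zpow_mul] at hpow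
  by_contra hk
  exact hinf _ (mul_ne_zero hk hn) hpow.symm

/-- Let `N` be a central subgroup of `G` isomorphic to `ℤ`, generated by an
infinite-order element `c`, and suppose every abelian subgroup of `Q = G/N` has rank at most one
(expressed by pulling back to `G`: whenever `a, b` commute modulo `N` there are `m n`, not both
zero, with `a^m ≡ b^n mod N`). If `β δ β⁻¹ = δ cᵏ`, then `k = 0`. -/
theorem stmt_7 {G : Type*} [Group G] (N : Subgroup G) (c : G)
    (hcentral : N ≤ Subgroup.center G)
    (hgen : Subgroup.zpowers c = N)
    (hinf : ∀ n : ℤ, n ≠ 0 → c ^ n ≠ 1)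
    (hrank : ∀ a b : G, a * b * a⁻¹ * b⁻¹ ∈ N →
      ∃ m n : ℤ, (m ≠ 0 ∨ n ≠ 0) ∧ a ^ m * (b ^ n)⁻¹ ∈ N)
    (δ β : G) (k : ℤ)
    (hconj : β * δ * β⁻¹ = δ * c ^ k) :
    k = 0 := by
  subst hgen
  have hc : ∀ g, Commute c g := fun g =>
    (Subgroup.mem_center_iff.mp (hcentral (Subgroup.mem_zpowers c)) g).symm
  have hβδ : ⁅β, δ⁆ = c ^ k := by
    rw [commutatorElement_def, hconj, mul_assoc, ((hc δ⁻¹).zpow_left k).eq, mul_inv_cancel_left]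
  have hδβ : ⁅δ, β⁆ = c ^ (-k) := by rw [← commutatorElement_inv, hβδ, zpow_neg]
  obtain ⟨m, n, hmn, t, ht⟩ := hrank β δ (by
    rw [← commutatorElement_def, hβδ]; exact Subgroup.zpow_mem_zpowers c k)
  have hβm : β ^ m = c ^ t * δ ^ n := by rw [show c ^ t = _ from ht, inv_mul_cancel_right]
  rcases hmn with hm | hn
  · have hδβm : Commute δ (β ^ m) := by
      rw [hβm]; exact ((hc δ).zpow_left t).symm.mul_right (Commute.self_zpow δ n)
    exact neg_eq_zero.mp (eq_zero_of_commutatorElement_eq_zpow (hc β).symm hinf hδβ hm hδβm)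
  · have hβδn : Commute β (δ ^ n) := by
      rw [show δ ^ n = (c ^ t)⁻¹ * β ^ m by rw [hβm, inv_mul_cancel_left]]
      exact ((hc β).zpow_left t).inv_left.symm.mul_right (Commute.self_zpow β m)
    exact eq_zero_of_commutatorElement_eq_zpow (hc δ).symm hinf hβδ hn hβδn
end
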